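/- arXiv:math/9907148 — 4 statements merged into one kernel-verified Lean document; each statement's English description precedes it below -/
import Mathlib

section
/- For every n ≥ 3, the alternating group A_n can be generated by two elements. -/
set_option linter.unusedSectionVars false
set_option maxHeartbeats 1000000

open Equiv Equiv.Perm Subgroup

open Equiv Equiv.Perm Subgroup

variable {α : Type*} [DecidableEq α] [Fintype α]

private def Xset (u v : α) : Set (Perm α) :=
  {f : Perm α | ∃ k, k ≠ u ∧ k ≠ v ∧ f = swap u k * swap u v}

private theorem swap_identity (u v a b : α) (huv : u ≠ v) (hab : a ≠ b)
    (hau : a ≠ u) (hav : a ≠ v) (hbu : b ≠ u) (hbv : b ≠ v) :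
    swap a b * swap u v =
      (swap u a * swap u v) * (swap u b * swap u v) * ((swap u b * swap u v) * (swap u a * swap u v)) := by
  ext x
  simp only [Equiv.Perm.mul_apply]
  by_cases h1 : x = u
  · subst h1; simp [Equiv.swap_apply_of_ne_of_ne, huv, hab, hau, hav, hbu, hbv,
      huv.symm, hab.symm, hau.symm, hav.symm, hbu.symm, hbv.symm]
  by_cases h2 : x = v
  · subst h2; simp [Equiv.swap_apply_of_ne_of_ne, huv, hab, hau, hav, hbu, hbv,
      huv.symm, hab.symm, hau.symm, hav.symm, hbu.symm, hbv.symm]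
  by_cases h3 : x = a
  · subst h3; simp [Equiv.swap_apply_of_ne_of_ne, huv, hab, hau, hav, hbu, hbv,
      huv.symm, hab.symm, hau.symm, hav.symm, hbu.symm, hbv.symm]
  by_cases h4 : x = b
  · subst h4; simp [Equiv.swap_apply_of_ne_of_ne, huv, hab, hau, hav, hbu, hbv,
      huv.symm, hab.symm, hau.symm, hav.symm, hbu.symm, hbv.symm]
  · simp [Equiv.swap_apply_of_ne_of_ne, h1, h2, h3, h4]

private theorem swap_identity2 (u v b : α) (huv : u ≠ v) (hbu : b ≠ u) (hbv : b ≠ v) :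
    swap v b * swap u v = (swap u b * swap u v)⁻¹ := by
  rw [mul_inv_rev, Equiv.swap_inv, Equiv.swap_inv]
  ext x
  simp only [Equiv.Perm.mul_apply]
  by_cases h1 : x = u
  · subst h1; simp [Equiv.swap_apply_of_ne_of_ne, huv, hbu, hbv, huv.symm, hbu.symm, hbv.symm]
  by_cases h2 : x = v
  · subst h2; simp [Equiv.swap_apply_of_ne_of_ne, huv, hbu, hbv, huv.symm, hbu.symm, hbv.symm]
  by_cases h3 : x = b
  · subst h3; simp [Equiv.swap_apply_of_ne_of_ne, huv, hbu, hbv, huv.symm, hbu.symm, hbv.symm]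
  · simp [Equiv.swap_apply_of_ne_of_ne, h1, h2, h3]

private theorem swap_mul_s_mem (u v : α) (huv : u ≠ v) {a b : α} (hab : a ≠ b) :
    swap a b * swap u v ∈ closure (Xset u v) := by
  have gen : ∀ k, k ≠ u → k ≠ v → swap u k * swap u v ∈ closure (Xset u v) := fun k h1 h2 =>
    subset_closure ⟨k, h1, h2, rfl⟩
  by_cases hau : a = u
  · rw [hau]
    have hab' : u ≠ b := fun h => hab (hau.trans h)
    by_cases hbv : b = v
    · rw [hbv, Equiv.swap_mul_self]; exact one_mem _
    · exact gen b (Ne.symm hab') hbv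
  by_cases hav : a = v
  · rw [hav]
    have hab' : v ≠ b := fun h => hab (hav.trans h)
    by_cases hbu : b = u
    · rw [hbu, Equiv.swap_comm, Equiv.swap_mul_self]; exact one_mem _
    · rw [swap_identity2 u v b huv hbu (Ne.symm hab')]
      exact inv_mem (gen b hbu (Ne.symm hab'))
  by_cases hbu : b = u
  · rw [hbu, Equiv.swap_comm]; exact gen a hau hav
  by_cases hbv : b = v
  · rw [hbv, Equiv.swap_comm, swap_identity2 u v a huv hau hav]
    exact inv_mem (gen a hau hav)
  · rw [swap_identity u v a b huv hab hau hav hbu hbv]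
    exact mul_mem (mul_mem (gen a hau hav) (gen b hbu hbv)) (mul_mem (gen b hbu hbv) (gen a hau hav))

private theorem pair_mem (u v : α) (huv : u ≠ v) {f g : Perm α} (hf : f.IsSwap) (hg : g.IsSwap) :
    f * g ∈ closure (Xset u v) := by
  obtain ⟨a, b, hab, rfl⟩ := hf
  obtain ⟨c, d, hcd, rfl⟩ := hg
  have : swap a b * swap c d = (swap a b * swap u v) * (swap c d * swap u v)⁻¹ := by
    rw [mul_inv_rev, Equiv.swap_inv, Equiv.swap_inv]
    group
    simp [Equiv.swap_mul_self, mul_assoc]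
  rw [this]
  exact mul_mem (swap_mul_s_mem u v huv hab) (inv_mem (swap_mul_s_mem u v huv hcd))

private theorem even_list_mem (u v : α) (huv : u ≠ v) :
    ∀ l : List (Perm α), (∀ g ∈ l, IsSwap g) → Even l.length → l.prod ∈ closure (Xset u v)
  | [], _, _ => by simp [one_mem]
  | [a], hl, he => by simp at he
  | a :: b :: l, hl, he => by
    rw [List.prod_cons, List.prod_cons, ← mul_assoc]
    refine mul_mem (pair_mem u v huv (hl a (by simp)) (hl b (by simp)))
      (even_list_mem u v huv l (fun g hg => hl g (by simp [hg])) ?_)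
    simpa [Nat.even_add_one, parity_simps] using he

private theorem alternating_le_closure (u v : α) (huv : u ≠ v) :
    alternatingGroup α ≤ closure (Xset u v) := by
  intro σ hσ
  obtain ⟨l, hl1, hl2⟩ := (truncSwapFactors σ).out
  have := (prod_list_swap_mem_alternatingGroup_iff_even_length hl2).1 (hl1 ▸ hσ)
  exact hl1 ▸ even_list_mem u v huv l hl2 this


private theorem conj_pair {α : Type*} [DecidableEq α] (c : Perm α) (p q r s : α) :
    c * (swap p q * swap r s) * c⁻¹ = swap (c p) (c q) * swap (c r) (c s) := by
  rw [Equiv.swap_apply_apply, Equiv.swap_apply_apply]; group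


private theorem odd_case (m : ℕ) (hm : Even m) :
    ∃ a b : Perm (Fin (m + 3)), a ∈ alternatingGroup (Fin (m + 3)) ∧
      b ∈ alternatingGroup (Fin (m + 3)) ∧
      closure ({a, b} : Set (Perm (Fin (m + 3)))) = alternatingGroup (Fin (m + 3)) := by
  let u : Fin (m + 3) := ⟨m + 2, by omega⟩
  let v : Fin (m + 3) := ⟨m + 1, by omega⟩
  let t : Perm (Fin (m + 3)) := swap u ⟨0, by omega⟩ * swap u v
  let c : Perm (Fin (m + 3)) := Fin.cycleRange ⟨m, by omega⟩
  have huv : u ≠ v := by simp [u, v, Fin.ext_iff]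
  have hcu : c u = u := Fin.cycleRange_of_gt (by simp [Fin.lt_def, u])
  have hcv : c v = v := Fin.cycleRange_of_gt (by simp [Fin.lt_def, v])
  have hck : ∀ k (hk : k < m), c ⟨k, by omega⟩ = ⟨k + 1, by omega⟩ := by
    intro k hk
    rw [show c = Fin.cycleRange ⟨m, by omega⟩ from rfl,
      Fin.cycleRange_of_lt (by simp only [Fin.lt_def]; omega)]
    apply Fin.ext
    rw [Fin.val_add_one_of_lt (by simp only [Fin.lt_def, Fin.val_last]; omega)]
  refine ⟨t, c, ?_, ?_, ?_⟩
  · rw [mem_alternatingGroup, show t = swap u ⟨0, by omega⟩ * swap u v from rfl, map_mul, sign_swap (by simp [u, Fin.ext_iff]),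
      sign_swap huv]
    norm_num
  · rw [mem_alternatingGroup, show c = Fin.cycleRange ⟨m, by omega⟩ from rfl, Fin.sign_cycleRange]
    exact hm.neg_one_pow
  · let H := closure ({t, c} : Set (Perm (Fin (m + 3))))
    have ht : t ∈ H := subset_closure (by simp)
    have hc : c ∈ H := subset_closure (by simp)
    have key : ∀ k (hk : k ≤ m), swap u ⟨k, by omega⟩ * swap u v ∈ H := by
      intro k
      induction k with
      | zero => intro _; exact ht
      | succ k ih =>
        intro hk
        have h1 := ih (by omega)
        have e := conj_pair c u (⟨k, by omega⟩ : Fin (m + 3)) u v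
        rw [hcu, hcv, hck k (by omega)] at e
        rw [← e]
        exact mul_mem (mul_mem hc h1) (inv_mem hc)
    apply le_antisymm
    · rw [closure_le]
      rintro x (rfl | rfl)
      · rw [SetLike.mem_coe, mem_alternatingGroup, show t = swap u ⟨0, by omega⟩ * swap u v from rfl, map_mul,
          sign_swap (by simp [u, Fin.ext_iff]), sign_swap huv]
        norm_num
      · rw [SetLike.mem_coe, mem_alternatingGroup, show c = Fin.cycleRange ⟨m, by omega⟩ from rfl, Fin.sign_cycleRange]
        exact hm.neg_one_pow
    · refine le_trans (alternating_le_closure u v huv) ((closure_le _).mpr ?_)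
      rintro x ⟨w, hwu, hwv, rfl⟩
      have hw : (w : ℕ) ≤ m := by
        have h1 : (w : ℕ) ≠ m + 2 := fun h => hwu (Fin.ext h)
        have h2 : (w : ℕ) ≠ m + 1 := fun h => hwv (Fin.ext h)
        have := w.isLt
        omega
      have : w = (⟨(w : ℕ), by omega⟩ : Fin (m + 3)) := Fin.ext rfl
      rw [this]
      exact key (w : ℕ) hw


private theorem even_case (m : ℕ) (hm : Odd m) :
    ∃ a b : Perm (Fin (m + 3)), a ∈ alternatingGroup (Fin (m + 3)) ∧
      b ∈ alternatingGroup (Fin (m + 3)) ∧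
      closure ({a, b} : Set (Perm (Fin (m + 3)))) = alternatingGroup (Fin (m + 3)) := by
  let u : Fin (m + 3) := ⟨m + 2, by omega⟩
  let v : Fin (m + 3) := ⟨m + 1, by omega⟩
  let t : Perm (Fin (m + 3)) := swap u ⟨0, by omega⟩ * swap u v
  let c : Perm (Fin (m + 3)) := Fin.cycleRange ⟨m + 1, by omega⟩
  have huv : u ≠ v := by simp [u, v, Fin.ext_iff]
  have hck : ∀ k (hk : k < m + 1), c ⟨k, by omega⟩ = ⟨k + 1, by omega⟩ := by
    intro k hk
    rw [show c = Fin.cycleRange ⟨m + 1, by omega⟩ from rfl,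
      Fin.cycleRange_of_lt (by simp only [Fin.lt_def]; omega)]
    apply Fin.ext
    rw [Fin.val_add_one_of_lt (by simp only [Fin.lt_def, Fin.val_last]; omega)]
  have hcu : c u = u := Fin.cycleRange_of_gt (by simp [Fin.lt_def, u])
  have hcv : c v = (⟨0, by omega⟩ : Fin (m + 3)) := Fin.cycleRange_of_eq rfl
  have hsign_t : t ∈ alternatingGroup (Fin (m + 3)) := by
    rw [mem_alternatingGroup, show t = swap u ⟨0, by omega⟩ * swap u v from rfl, map_mul,
      sign_swap (by simp [u, Fin.ext_iff]), sign_swap huv]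
    norm_num
  have hsign_c : c ∈ alternatingGroup (Fin (m + 3)) := by
    rw [mem_alternatingGroup, show c = Fin.cycleRange ⟨m + 1, by omega⟩ from rfl,
      Fin.sign_cycleRange]
    apply Even.neg_one_pow
    show Even (m + 1)
    obtain ⟨j, rfl⟩ := hm
    exact ⟨j + 1, by ring⟩
  refine ⟨t, c, hsign_t, hsign_c, ?_⟩
  let H := closure ({t, c} : Set (Perm (Fin (m + 3))))
  have ht : t ∈ H := subset_closure (by simp)
  have hc : c ∈ H := subset_closure (by simp)
  have key : ∀ k (hk : k ≤ m),
      swap u ⟨k, by omega⟩ * swap u v ∈ H ∧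
      swap u ⟨k + 1, by omega⟩ * swap u ⟨k, by omega⟩ ∈ H := by
    intro k
    induction k with
    | zero =>
      intro _
      refine ⟨ht, ?_⟩
      have e := conj_pair c u (⟨0, by omega⟩ : Fin (m + 3)) u v
      rw [hcu, hcv, hck 0 (by omega)] at e
      rw [← e]
      exact mul_mem (mul_mem hc ht) (inv_mem hc)
    | succ k ih =>
      intro hk
      obtain ⟨hx, hz⟩ := ih (by omega)
      have hx' : swap u ⟨k + 1, by omega⟩ * swap u v ∈ H := by
        have e : (swap u (⟨k + 1, by omega⟩ : Fin (m + 3)) * swap u ⟨k, by omega⟩) *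
            (swap u ⟨k, by omega⟩ * swap u v) = swap u ⟨k + 1, by omega⟩ * swap u v := by
          rw [mul_assoc, ← mul_assoc (swap u ⟨k, by omega⟩), Equiv.swap_mul_self, one_mul]
        rw [← e]
        exact mul_mem hz hx
      refine ⟨hx', ?_⟩
      have e := conj_pair c u (⟨k + 1, by omega⟩ : Fin (m + 3)) u (⟨k, by omega⟩ : Fin (m + 3))
      rw [hcu, hck (k + 1) (by omega), hck k (by omega)] at e
      rw [← e]
      exact mul_mem (mul_mem hc hz) (inv_mem hc)
  apply le_antisymm
  · rw [closure_le]
    rintro x (rfl | rfl)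
    · exact hsign_t
    · exact hsign_c
  · refine le_trans (alternating_le_closure u v huv) ((closure_le _).mpr ?_)
    rintro x ⟨w, hwu, hwv, rfl⟩
    have hw : (w : ℕ) ≤ m := by
      have h1 : (w : ℕ) ≠ m + 2 := fun h => hwu (Fin.ext h)
      have h2 : (w : ℕ) ≠ m + 1 := fun h => hwv (Fin.ext h)
      have := w.isLt
      omega
    have hww : w = (⟨(w : ℕ), by omega⟩ : Fin (m + 3)) := Fin.ext rfl
    rw [hww]
    exact (key (w : ℕ) hw).1


private theorem wrap {G : Type*} [Group G] {A : Subgroup G} {a b : G}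
    (ha : a ∈ A) (hb : b ∈ A) (h : closure {a, b} = A) :
    ∃ g h' : A, closure ({g, h'} : Set A) = ⊤ := by
  refine ⟨⟨a, ha⟩, ⟨b, hb⟩, ?_⟩
  apply Subgroup.map_injective A.subtype_injective
  rw [MonoidHom.map_closure, ← MonoidHom.range_eq_map, Subgroup.range_subtype]
  rw [Set.image_pair]
  exact h

theorem alternating_two_generated (n : ℕ) (hn : 3 ≤ n) :
    ∃ g h : alternatingGroup (Fin n),
      Subgroup.closure ({g, h} : Set (alternatingGroup (Fin n))) = ⊤ := by
  obtain ⟨m, rfl⟩ : ∃ m, n = m + 3 := ⟨n - 3, by omega⟩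
  obtain ⟨a, b, ha, hb, hab⟩ := (Nat.even_or_odd m).elim (odd_case m) (even_case m)
  exact wrap ha hb hab
end

section
/- Every cycle of even length in S_n can be written as a product of an involution in S_n and an involution in A_n. -/
open Equiv Equiv.Perm

theorem even_cycle_product_involution_and_even_involution (n : ℕ) (σ : Equiv.Perm (Fin n))
    (hσ : σ.IsCycle) (heven : Even σ.support.card) :
    ∃ a b : Equiv.Perm (Fin n),
      a ^ 2 = 1 ∧ b ^ 2 = 1 ∧ b ∈ alternatingGroup (Fin n) ∧ σ = a * b := by
  classical
  set k := σ.support.card with hk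
  have hk2 : 2 ≤ k := hσ.two_le_card_support
  haveI : NeZero k := ⟨by omega⟩
  have hord : orderOf σ = k := hσ.orderOf
  obtain ⟨x, hx, -⟩ := id hσ
  have hxs : x ∈ σ.support := Equiv.Perm.mem_support.2 hx
  -- the parametrization of the support
  have fe : ∀ i : ZMod k, (σ ^ i.val) x ∈ σ.support := fun i =>
    Equiv.Perm.pow_apply_mem_support.2 hxs
  have hinj : Function.Injective (fun i : ZMod k => (⟨(σ ^ i.val) x, fe i⟩ : σ.support)) := by
    have key : ∀ i j : ZMod k, i.val ≤ j.val → (σ ^ i.val) x = (σ ^ j.val) x → i = j := by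
      intro i j hle h
      have h1 : (σ ^ (j.val - i.val)) ((σ ^ i.val) x) = (σ ^ i.val) x := by
        rw [← Equiv.Perm.mul_apply, ← pow_add, Nat.sub_add_cancel hle, ← h]
      have h2 : σ ^ (j.val - i.val) = 1 :=
        (hσ.pow_eq_one_iff' (Equiv.Perm.mem_support.1 (fe i))).2 h1
      have h3 : k ∣ j.val - i.val := by
        have h3' : orderOf σ ∣ j.val - i.val := orderOf_dvd_of_pow_eq_one h2
        rwa [hord] at h3'
      have h4 : j.val - i.val < k := lt_of_le_of_lt (Nat.sub_le _ _) (ZMod.val_lt j)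
      have h5 : j.val = i.val := by
        have h6 := Nat.eq_zero_of_dvd_of_lt h3 h4
        omega
      exact (ZMod.val_injective k h5).symm
    intro i j hij
    simp only [Subtype.mk.injEq] at hij
    rcases le_total i.val j.val with hle | hle
    · exact key i j hle hij
    · exact (key j i hle hij.symm).symm
  have hbij : Function.Bijective (fun i : ZMod k => (⟨(σ ^ i.val) x, fe i⟩ : σ.support)) := by
    rw [Fintype.bijective_iff_injective_and_card]
    refine ⟨hinj, ?_⟩
    rw [ZMod.card, Fintype.card_coe]
  set e : ZMod k ≃ σ.support := Equiv.ofBijective _ hbij with he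
  have he_apply : ∀ i : ZMod k, (e i : Fin n) = (σ ^ i.val) x := fun i => rfl
  -- σ shifts the parametrization
  have hse : ∀ i : ZMod k, σ (e i) = (e (i + 1) : Fin n) := by
    intro i
    rw [he_apply, he_apply]
    have h1 : σ ((σ ^ i.val) x) = (σ ^ (i.val + 1)) x := by
      rw [pow_succ', Equiv.Perm.mul_apply]
    rw [h1]
    have hval : (i + 1 : ZMod k).val = (i.val + 1) % k := by
      rw [ZMod.val_add, ZMod.val_one_eq_one_mod, Nat.mod_eq_of_lt (by omega : 1 < k)]
    have hmod : (σ : Equiv.Perm (Fin n)) ^ (i.val + 1) = σ ^ (i + 1 : ZMod k).val := by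
      rw [pow_eq_pow_iff_modEq, hord, hval]
      exact (Nat.mod_modEq _ k).symm
    rw [hmod]
  -- the reversing involution on the support
  set bsub : Equiv.Perm σ.support := e.permCongr (Equiv.neg (ZMod k)) with hbsub
  have hbsub_apply : ∀ i : ZMod k, bsub (e i) = e (-i) := by
    intro i
    simp [hbsub, Equiv.permCongr_apply]
  set b : Equiv.Perm (Fin n) := Equiv.Perm.ofSubtype bsub with hb
  have hb_apply : ∀ i : ZMod k, b (e i) = (e (-i) : Fin n) := by
    intro i
    rw [hb, Equiv.Perm.ofSubtype_apply_of_mem bsub (e i).2]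
    exact congrArg Subtype.val (hbsub_apply i)
  have hbsub2 : bsub ^ 2 = 1 := by
    ext y
    have hy : y = e (e.symm y) := (e.apply_symm_apply y).symm
    rw [pow_two, Equiv.Perm.mul_apply, hy, hbsub_apply, hbsub_apply, neg_neg,
      Equiv.Perm.one_apply]
  have hb2 : b ^ 2 = 1 := by
    rw [hb, ← map_pow, hbsub2, map_one]
  -- b conjugates σ to σ⁻¹
  have hconj : b * σ * b = σ⁻¹ := by
    ext y
    by_cases hy : y ∈ σ.support
    · set i := e.symm ⟨y, hy⟩ with hi
      have hyi : y = (e i : Fin n) := by rw [hi, e.apply_symm_apply]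
      have h1 : σ ((e (i - 1) : Fin n)) = y := by
        rw [hse, sub_add_cancel, ← hyi]
      have : σ⁻¹ y = (e (i - 1) : Fin n) := by
        rw [← h1, Equiv.Perm.inv_def, Equiv.symm_apply_apply]
      rw [this]
      rw [Equiv.Perm.mul_apply, Equiv.Perm.mul_apply, hyi, hb_apply, hse, hb_apply]
      have harg : -(-i + 1) = i - 1 := by ring
      rw [harg]
    · have hb_fix : b y = y := by
        rw [hb]
        exact Equiv.Perm.ofSubtype_apply_of_not_mem bsub hy
      have hσ_fix : σ y = y := Equiv.Perm.notMem_support.1 hy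
      have hσi_fix : σ⁻¹ y = y := by
        rw [← hσ_fix, Equiv.Perm.inv_def, Equiv.symm_apply_apply, hσ_fix]
      rw [Equiv.Perm.mul_apply, Equiv.Perm.mul_apply, hb_fix, hσ_fix, hb_fix, hσi_fix]
  set a : Equiv.Perm (Fin n) := σ * b with ha
  have hbb : b * b = 1 := by rw [← pow_two]; exact hb2
  have ha2 : a ^ 2 = 1 := by
    rw [ha, pow_two, mul_assoc, ← mul_assoc b σ b, hconj]
    group
  have hab : σ = a * b := by
    rw [ha, mul_assoc, hbb, mul_one]
  -- sign considerations
  have hsign : Equiv.Perm.sign σ = -1 := by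
    rw [hσ.sign, Even.neg_one_pow heven]
  have hsab : Equiv.Perm.sign a * Equiv.Perm.sign b = -1 := by
    rw [← map_mul, ← hab, hsign]
  rcases Int.units_eq_one_or (Equiv.Perm.sign b) with hsb | hsb
  · exact ⟨a, b, ha2, hb2, Equiv.Perm.mem_alternatingGroup.2 hsb, hab⟩
  · have hsa : Equiv.Perm.sign a = 1 := by
      rw [hsb] at hsab
      have := hsab
      rcases Int.units_eq_one_or (Equiv.Perm.sign a) with h | h
      · exact h
      · rw [h] at this; norm_num at this
    have haa : a * a = 1 := by rw [← pow_two]; exact ha2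
    refine ⟨a * b * a, a, ?_, ha2, Equiv.Perm.mem_alternatingGroup.2 hsa, ?_⟩
    · rw [pow_two]
      calc a * b * a * (a * b * a) = a * b * (a * a) * b * a := by group
        _ = a * (b * b) * a := by rw [haa]; group
        _ = a * a := by rw [hbb]; group
        _ = 1 := haa
    · rw [mul_assoc, haa, mul_one, ← hab]
end

section
/- Let G be a transitive permutation group of degree n generated by permutations σ_1,…,σ_k, and suppose G contains a cycle μ of prime length q. Suppose further that for each generator σ_i there exists a point a in the support of μ such that σ_i(a) also lies in the support of μ. Then G is primitive. -/
open Pointwise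


/-- A permutation group is primitive if it is transitive and every block of the
action is trivial (a subsingleton or the whole set). -/
def IsPrimitivePermGroup {n : ℕ} (G : Subgroup (Equiv.Perm (Fin n))) : Prop :=
  MulAction.IsPretransitive G (Fin n) ∧
    ∀ B : Set (Fin n), MulAction.IsBlock G B → B.Subsingleton ∨ B = Set.univ

theorem primitive_of_generators_meeting_prime_cycle (n k q : ℕ) (hq : q.Prime)
    (σ : Fin k → Equiv.Perm (Fin n))
    (G : Subgroup (Equiv.Perm (Fin n)))
    (hG : G = Subgroup.closure (Set.range σ))
    (htrans : MulAction.IsPretransitive G (Fin n))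
    (μ : Equiv.Perm (Fin n)) (hμG : μ ∈ G)
    (hμ : μ.IsCycle) (hμq : μ.support.card = q)
    (hmeet : ∀ i : Fin k, ∃ a ∈ μ.support, σ i a ∈ μ.support) :
    IsPrimitivePermGroup G := by
  classical
  refine ⟨htrans, fun B hB => ?_⟩
  by_contra hcon
  push_neg at hcon
  obtain ⟨hBs, hBuniv⟩ := hcon
  rw [Set.Nontrivial] at hBs
  obtain ⟨x, hx, y, hy, hxy⟩ := hBs
  have hq2 : 2 ≤ q := hq.two_le
  have hsne : μ.support.Nonempty := Finset.card_pos.mp (by omega)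
  obtain ⟨s, hs⟩ := hsne
  obtain ⟨g, hg⟩ := MulAction.exists_smul_eq G x s
  set C : Set (Fin n) := g • B with hCdef
  have hCB : MulAction.IsBlock G C := hB.translate g
  have hsC : s ∈ C := by rw [← hg]; exact Set.smul_mem_smul_set hx
  set x' : Fin n := g • y with hx'def
  have hx'C : x' ∈ C := Set.smul_mem_smul_set hy
  have hx's : x' ≠ s := by
    intro h
    exact hxy.symm (smul_left_cancel g (h.trans hg.symm))
  -- coercion of subgroup smul on sets
  have coe_smul : ∀ (h : G) (D : Set (Fin n)), h • D = (h : Equiv.Perm (Fin n)) • D :=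
    fun h D => rfl
  set μ' : G := ⟨μ, hμG⟩ with hμ'def
  have horder : orderOf μ' = q := by
    have h1 : orderOf (G.subtype μ') = orderOf μ' :=
      orderOf_injective G.subtype G.subtype_injective μ'
    rw [← h1]
    show orderOf μ = q
    rw [hμ.orderOf, hμq]
  -- μ' stabilizes C
  have hμstab : μ' • C = C := by
    by_cases hxS : x' ∈ μ.support
    · obtain ⟨i, hi⟩ := hμ.exists_pow_eq (Equiv.Perm.mem_support.mp hs)
        (Equiv.Perm.mem_support.mp hxS)
      have hpt : (μ' ^ i) • s = x' := by
        show ((μ' ^ i : G) : Equiv.Perm (Fin n)) • s = x'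
        rw [SubmonoidClass.coe_pow]
        exact hi
      have hiC : (μ' ^ i) • C = C :=
        hCB.smul_eq_of_mem hsC (by rw [hpt]; exact hx'C)
      have hine : ¬ (q ∣ i) := by
        intro hdvd
        have : μ' ^ i = 1 := by
          rw [← horder] at hdvd
          exact orderOf_dvd_iff_pow_eq_one.mp hdvd
        rw [this, one_smul] at hpt
        exact hx's hpt.symm
      have hcop : i.Coprime (orderOf μ') := by
        rw [horder]
        exact ((Nat.Prime.coprime_iff_not_dvd hq).mpr hine).symm
      obtain ⟨m, hm⟩ := exists_pow_eq_self_of_coprime hcop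
      have : μ' ^ i ∈ MulAction.stabilizer G C := MulAction.mem_stabilizer_iff.mpr hiC
      have hpm : (μ' ^ i) ^ m ∈ MulAction.stabilizer G C := pow_mem this m
      rw [hm] at hpm
      exact MulAction.mem_stabilizer_iff.mp hpm
    · have hfix : μ x' = x' := Equiv.Perm.notMem_support.mp hxS
      refine hCB.smul_eq_of_mem hx'C ?_
      show μ • x' ∈ C
      rw [Equiv.Perm.smul_def, hfix]
      exact hx'C
  have hμstab' : μ' ∈ MulAction.stabilizer G C := MulAction.mem_stabilizer_iff.mpr hμstab
  -- support of μ is contained in C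
  have hSC : ∀ z ∈ μ.support, z ∈ C := by
    intro z hz
    obtain ⟨i, hi⟩ := hμ.exists_pow_eq (Equiv.Perm.mem_support.mp hs)
      (Equiv.Perm.mem_support.mp hz)
    have hiC : (μ' ^ i) • C = C :=
      MulAction.mem_stabilizer_iff.mp (pow_mem hμstab' i)
    have hpt : (μ' ^ i) • s = z := by
      show ((μ' ^ i : G) : Equiv.Perm (Fin n)) • s = z
      rw [SubmonoidClass.coe_pow]
      exact hi
    rw [← hiC, ← hpt]
    exact Set.smul_mem_smul_set hsC
  -- every element of G stabilizes C
  have hGstab : ∀ h : G, h • C = C := by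
    intro h
    have hmem : (h : Equiv.Perm (Fin n)) ∈ Subgroup.closure (Set.range σ) := hG ▸ h.2
    rw [coe_smul]
    refine Subgroup.closure_induction ?_ ?_ ?_ ?_ hmem
    · rintro _ ⟨i, rfl⟩
      obtain ⟨a, ha, hmove⟩ := hmeet i
      have hσG : σ i ∈ G := hG ▸ Subgroup.subset_closure ⟨i, rfl⟩
      have := hCB.smul_eq_of_mem (g := ⟨σ i, hσG⟩) (hSC a ha)
        (by show σ i • a ∈ C; rw [Equiv.Perm.smul_def]; exact hSC _ hmove)
      rw [coe_smul] at this
      exact this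
    · exact one_smul _ _
    · intro a b _ _ ha hb
      rw [mul_smul, hb, ha]
    · intro a _ ha
      calc a⁻¹ • C = a⁻¹ • (a • C) := by rw [ha]
        _ = C := inv_smul_smul a C
  -- by transitivity C = univ
  have hCuniv : C = Set.univ := by
    refine Set.eq_univ_of_forall fun z => ?_
    obtain ⟨g', hg'⟩ := MulAction.exists_smul_eq G s z
    rw [← hGstab g', ← hg']
    exact Set.smul_mem_smul_set hsC
  -- hence B = univ, contradiction
  apply hBuniv
  have : B = g⁻¹ • C := by rw [hCdef, inv_smul_smul]
  rw [this, hCuniv]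
  exact Set.smul_set_univ
end

section
/- Let q be a prime, and let μ ∈ S_n be a q-cycle. Let B be a partition of {1,…,n} into blocks preserved by a group G containing μ, all blocks having the same cardinality b > 1. If the induced permutation of μ on the blocks is nontrivial, then every block in the support of the induced permutation is contained in the support of μ, and consequently b · q ≤ q, a contradiction; hence the induced permutation of μ on the blocks is the identity. -/
open Pointwise

/-- If a prime cycle `μ` in a group `G` preserves a block system whose blocks all
have the same size `b > 1`, then the permutation induced by `μ` on the blocks is
trivial: `μ` maps every block to itself. -/
theorem induced_action_of_prime_cycle_on_blocks_trivial (n q b : ℕ) (hq : q.Prime)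
    (hb : 1 < b) (μ : Equiv.Perm (Fin n)) (hμ : μ.IsCycle) (hμq : μ.support.card = q)
    (G : Subgroup (Equiv.Perm (Fin n))) (hμG : μ ∈ G)
    (B : Set (Set (Fin n))) (hpart : Setoid.IsPartition B)
    (hcard : ∀ s ∈ B, s.ncard = b)
    (hinv : ∀ g ∈ G, ∀ s ∈ B, g '' s ∈ B) :
    ∀ s ∈ B, μ '' s = s := by
  intro s hs
  by_contra hne
  have horder : orderOf μ = q := by rw [← hμq]; exact hμ.orderOf
  have hμqpow : μ ^ q = 1 := by rw [← horder]; exact pow_orderOf_eq_one μ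
  -- uniqueness of blocks containing a given point
  have huniq : ∀ t ∈ B, ∀ t' ∈ B, ∀ x : Fin n, x ∈ t → x ∈ t' → t = t' := by
    intro t ht t' ht' x hxt hxt'
    obtain ⟨u, -, hu⟩ := hpart.2 x
    rw [hu t ⟨ht, hxt⟩, hu t' ⟨ht', hxt'⟩]
  -- orbit blocks are blocks
  have hblk : ∀ k : ℕ, (μ ^ k) '' s ∈ B := fun k => hinv _ (pow_mem hμG k) s hs
  -- μ commutes with its powers on images
  have hcomm : ∀ k : ℕ, μ '' ((μ ^ k) '' s) = (μ ^ k) '' (μ '' s) := by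
    intro k
    rw [Set.image_image, Set.image_image]
    have hc : μ * μ ^ k = μ ^ k * μ := (Commute.self_pow μ k).eq
    simp only [← Equiv.Perm.mul_apply, hc]
  -- each orbit block is moved by μ
  have hmoved : ∀ k : ℕ, μ '' ((μ ^ k) '' s) ≠ (μ ^ k) '' s := by
    intro k h
    apply hne
    have h1 : (μ ^ k) '' (μ '' s) = (μ ^ k) '' s := by rw [← hcomm k, h]
    exact (Set.image_eq_image (Equiv.injective (μ ^ k))).mp h1
  -- a moved block is contained in the support
  have hsub : ∀ k : ℕ, ∀ x ∈ (μ ^ k) '' s, x ∈ μ.support := by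
    intro k x hx
    rw [Equiv.Perm.mem_support]
    intro hfix
    apply hmoved k
    have hx' : x ∈ μ '' ((μ ^ k) '' s) := ⟨x, hx, hfix⟩
    exact huniq _ (hinv μ hμG _ (hblk k)) _ (hblk k) x hx' hx
  -- if μ^d stabilizes s with 0 < d < q, then μ stabilizes s (Bezout)
  have hstab : ∀ d : ℕ, 0 < d → d < q → (μ ^ d) '' s = s → False := by
    intro d hd0 hdq hds
    apply hne
    have hdvd : ¬ q ∣ d := Nat.not_dvd_of_pos_of_lt hd0 hdq
    have hcop : IsCoprime (d : ℤ) (q : ℤ) := by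
      rw [Int.isCoprime_iff_gcd_eq_one, Int.gcd_natCast_natCast]
      exact ((hq.coprime_iff_not_dvd.mpr hdvd).symm).gcd_eq_one
    obtain ⟨u, v, huv⟩ := hcop
    let S := MulAction.stabilizer (Equiv.Perm (Fin n)) s
    have hsmul : ∀ g : Equiv.Perm (Fin n), g • s = g '' s := by
      intro g
      rw [← Set.image_smul]
      rfl
    have hdS : μ ^ d ∈ S := by
      show (μ ^ d) • s = s
      rw [hsmul]; exact hds
    have hqS : μ ^ q ∈ S := by
      rw [hμqpow]; exact one_mem S
    have hμS : μ ∈ S := by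
      have hμeq : μ = (μ ^ d) ^ u * (μ ^ q) ^ v := by
        rw [← zpow_natCast μ d, ← zpow_natCast μ q, ← zpow_mul, ← zpow_mul,
          ← zpow_add, mul_comm (d : ℤ) u, mul_comm (q : ℤ) v, huv, zpow_one]
      rw [hμeq]
      exact mul_mem (zpow_mem hdS u) (zpow_mem hqS v)
    have : μ • s = s := hμS
    rwa [hsmul] at this
  -- distinct orbit blocks are distinct as sets
  have hstep : ∀ j k : ℕ, j < k → k < q → (μ ^ j) '' s ≠ (μ ^ k) '' s := by
    intro j k hjk hkq heq
    apply hstab (k - j) (Nat.sub_pos_of_lt hjk) (lt_of_le_of_lt (Nat.sub_le k j) hkq)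
    have hk : μ ^ k = μ ^ j * μ ^ (k - j) := by
      rw [← pow_add, Nat.add_sub_cancel' hjk.le]
    have h1 : (μ ^ j) '' ((μ ^ (k - j)) '' s) = (μ ^ j) '' s := by
      rw [← Set.image_comp, ← Equiv.Perm.coe_mul, ← hk, ← heq]
    exact (Set.image_eq_image (Equiv.injective (μ ^ j))).mp h1
  -- counting
  have hsfin : s.Finite := s.toFinite
  set F : Finset (Fin n) := hsfin.toFinset with hF
  have hFcard : F.card = b := by
    rw [← hcard s hs, Set.ncard_eq_toFinset_card s hsfin]
  have hmemF : ∀ k : ℕ, ∀ x : Fin n, x ∈ F.image (μ ^ k) ↔ x ∈ (μ ^ k) '' s := by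
    intro k x
    simp only [Finset.mem_image, Set.mem_image, hF, Set.Finite.mem_toFinset]
  have hdisj : ∀ j ∈ Finset.range q, ∀ k ∈ Finset.range q, j ≠ k →
      Disjoint (F.image (μ ^ j)) (F.image (μ ^ k)) := by
    intro j hj k hk hjk
    rw [Finset.disjoint_left]
    intro x hxj hxk
    have hxj' : x ∈ (μ ^ j) '' s := (hmemF j x).mp hxj
    have hxk' : x ∈ (μ ^ k) '' s := (hmemF k x).mp hxk
    have heq := huniq _ (hblk j) _ (hblk k) x hxj' hxk'
    rcases hjk.lt_or_gt with h | h
    · exact hstep j k h (Finset.mem_range.mp hk) heq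
    · exact hstep k j h (Finset.mem_range.mp hj) heq.symm
  have hsubF : ((Finset.range q).biUnion fun k => F.image (μ ^ k)) ⊆ μ.support := by
    intro x hx
    rw [Finset.mem_biUnion] at hx
    obtain ⟨k, -, hxk⟩ := hx
    exact hsub k x ((hmemF k x).mp hxk)
  have h2 := Finset.card_le_card hsubF
  rw [Finset.card_biUnion hdisj, hμq] at h2
  have h3 : ∀ k : ℕ, (F.image (μ ^ k)).card = b := by
    intro k
    rw [Finset.card_image_of_injective _ (Equiv.injective _), hFcard]
  rw [Finset.sum_congr rfl (fun k _ => h3 k), Finset.sum_const, Finset.card_range,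
    smul_eq_mul] at h2
  have hb1 : b ≤ 1 :=
    Nat.le_of_mul_le_mul_left (by simpa using h2) hq.pos
  omega
end
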